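/- The pushout, in the category of topological spaces, of two copies of the solid torus S¹ × D² along the inclusion of their common boundary torus S¹ × S¹ (i.e., the double of the solid torus along its boundary) is homeomorphic to S¹ × S². -/

import Mathlib

/-!
The unit sphere `Sⁿ ⊂ ℝⁿ⁺¹` is the union of its two closed hemispheres, the graphs of
`w ↦ ±√(1 - ‖w‖²)` over the disk `Dⁿ`, which meet along the equator `Sⁿ⁻¹`. So for any space `X`
the double of `X × Dⁿ` along `X × Sⁿ⁻¹` is `X × Sⁿ`: the map out of the pushout is given by the
two graph maps, and its inverse projects to the disk and picks the copy according to the sign of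
the last coordinate; this is continuous because the two copies are glued along the equator.
The solid torus is the case `X = S¹`, `n = 2`.
-/

open CategoryTheory Limits Metric

noncomputable def boundaryTorusIncl :
    TopCat.of (sphere (0 : EuclideanSpace ℝ (Fin 2)) 1 ×
        sphere (0 : EuclideanSpace ℝ (Fin 2)) 1) ⟶
      TopCat.of (sphere (0 : EuclideanSpace ℝ (Fin 2)) 1 ×
        closedBall (0 : EuclideanSpace ℝ (Fin 2)) 1) :=
  TopCat.ofHom ⟨Prod.map id (Set.inclusion sphere_subset_closedBall),
    Continuous.prodMap continuous_id (continuous_inclusion _)⟩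

noncomputable section

namespace EuclideanSpace

variable {n : ℕ}

def snoc (w : EuclideanSpace ℝ (Fin n)) (t : ℝ) : EuclideanSpace ℝ (Fin (n + 1)) :=
  WithLp.toLp 2 (Fin.snoc (α := fun _ => ℝ) w t)

def init (p : EuclideanSpace ℝ (Fin (n + 1))) : EuclideanSpace ℝ (Fin n) :=
  WithLp.toLp 2 (Fin.init (α := fun _ => ℝ) p)

@[simp]
lemma snoc_apply_castSucc (w : EuclideanSpace ℝ (Fin n)) (t : ℝ) (i : Fin n) :
    snoc w t i.castSucc = w i := by
  simp [snoc]

@[simp]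
lemma snoc_apply_last (w : EuclideanSpace ℝ (Fin n)) (t : ℝ) : snoc w t (Fin.last n) = t := by
  simp [snoc]

@[simp]
lemma init_apply (p : EuclideanSpace ℝ (Fin (n + 1))) (i : Fin n) : init p i = p i.castSucc :=
  rfl

@[simp]
lemma init_snoc (w : EuclideanSpace ℝ (Fin n)) (t : ℝ) : init (snoc w t) = w := by
  ext i; simp

@[simp]
lemma snoc_init (p : EuclideanSpace ℝ (Fin (n + 1))) : snoc (init p) (p (Fin.last n)) = p := by
  ext i; induction i using Fin.lastCases <;> simp

lemma norm_snoc_sq (w : EuclideanSpace ℝ (Fin n)) (t : ℝ) :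
    ‖snoc w t‖ ^ 2 = ‖w‖ ^ 2 + t ^ 2 := by
  simp [EuclideanSpace.real_norm_sq_eq, Fin.sum_univ_castSucc]

lemma norm_init_sq (p : EuclideanSpace ℝ (Fin (n + 1))) :
    ‖init p‖ ^ 2 = ‖p‖ ^ 2 - p (Fin.last n) ^ 2 := by
  have h := norm_snoc_sq (init p) (p (Fin.last n))
  rw [snoc_init] at h
  linarith

lemma continuous_snoc : Continuous fun q : EuclideanSpace ℝ (Fin n) × ℝ => snoc q.1 q.2 := by
  refine (PiLp.continuous_toLp _ _).comp (continuous_pi fun i => ?_)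
  induction i using Fin.lastCases <;> simp only [Fin.snoc_last, Fin.snoc_castSucc] <;> fun_prop

lemma continuous_init : Continuous (init : EuclideanSpace ℝ (Fin (n + 1)) → _) := by
  unfold init; fun_prop

lemma norm_init_le (p : EuclideanSpace ℝ (Fin (n + 1))) : ‖init p‖ ≤ ‖p‖ :=
  (sq_le_sq₀ (norm_nonneg _) (norm_nonneg _)).1 <| by
    linarith [norm_init_sq p, sq_nonneg (p (Fin.last n))]

lemma norm_init_of_apply_last_eq_zero {p : EuclideanSpace ℝ (Fin (n + 1))}
    (h : p (Fin.last n) = 0) : ‖init p‖ = ‖p‖ := by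
  rw [← sq_eq_sq₀ (norm_nonneg _) (norm_nonneg _), norm_init_sq, h]
  ring

def hemisphereLift (t : ℝ) (w : EuclideanSpace ℝ (Fin n)) : EuclideanSpace ℝ (Fin (n + 1)) :=
  snoc w (t * √(1 - ‖w‖ ^ 2))

@[simp]
lemma init_hemisphereLift (t : ℝ) (w : EuclideanSpace ℝ (Fin n)) :
    init (hemisphereLift t w) = w :=
  init_snoc _ _

@[simp]
lemma hemisphereLift_apply_last (t : ℝ) (w : EuclideanSpace ℝ (Fin n)) :
    hemisphereLift t w (Fin.last n) = t * √(1 - ‖w‖ ^ 2) :=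
  snoc_apply_last _ _

lemma norm_hemisphereLift {t : ℝ} (ht : |t| = 1) {w : EuclideanSpace ℝ (Fin n)} (hw : ‖w‖ ≤ 1) :
    ‖hemisphereLift t w‖ = 1 := by
  have ht2 : t ^ 2 = 1 := by rw [← sq_abs, ht, one_pow]
  have hw2 : 0 ≤ 1 - ‖w‖ ^ 2 := by nlinarith [norm_nonneg w]
  rw [← pow_eq_one_iff_of_nonneg (norm_nonneg _) two_ne_zero, hemisphereLift, norm_snoc_sq,
    mul_pow, Real.sq_sqrt hw2, ht2]
  ring

lemma hemisphereLift_of_norm_eq_one (t : ℝ) {w : EuclideanSpace ℝ (Fin n)} (hw : ‖w‖ = 1) :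
    hemisphereLift t w = snoc w 0 := by
  simp [hemisphereLift, hw]

lemma sqrt_one_sub_norm_init_sq {p : EuclideanSpace ℝ (Fin (n + 1))} (hp : ‖p‖ = 1) :
    √(1 - ‖init p‖ ^ 2) = |p (Fin.last n)| := by
  rw [norm_init_sq, hp, one_pow, sub_sub_cancel, Real.sqrt_sq_eq_abs]

lemma hemisphereLift_one_init {p : EuclideanSpace ℝ (Fin (n + 1))} (hp : ‖p‖ = 1)
    (h : 0 ≤ p (Fin.last n)) : hemisphereLift 1 (init p) = p := by
  rw [hemisphereLift, sqrt_one_sub_norm_init_sq hp, abs_of_nonneg h, one_mul, snoc_init]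

lemma hemisphereLift_neg_one_init {p : EuclideanSpace ℝ (Fin (n + 1))} (hp : ‖p‖ = 1)
    (h : p (Fin.last n) ≤ 0) : hemisphereLift (-1) (init p) = p := by
  rw [hemisphereLift, sqrt_one_sub_norm_init_sq hp, abs_of_nonpos h, neg_one_mul, neg_neg,
    snoc_init]

lemma continuous_hemisphereLift (t : ℝ) : Continuous (hemisphereLift (n := n) t) :=
  continuous_snoc.comp (continuous_id.prodMk (by fun_prop))

end EuclideanSpace

open EuclideanSpace

local notation "𝔻" n:max => closedBall (0 : EuclideanSpace ℝ (Fin n)) 1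
local notation "∂𝔻" n:max => sphere (0 : EuclideanSpace ℝ (Fin n)) 1
local notation "𝕊" n:max => sphere (0 : EuclideanSpace ℝ (Fin (n + 1))) 1

def hemisphereMap {n : ℕ} (t : ℝ) (ht : |t| = 1) : C(𝔻 n, 𝕊 n) where
  toFun w := ⟨hemisphereLift t w, mem_sphere_zero_iff_norm.2 <|
    norm_hemisphereLift ht (mem_closedBall_zero_iff.1 w.2)⟩
  continuous_toFun := (continuous_hemisphereLift t).comp continuous_subtype_val |>.subtype_mk _

def sphereToDisk {n : ℕ} : C(𝕊 n, 𝔻 n) where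
  toFun p := ⟨init p, mem_closedBall_zero_iff.2 <|
    (norm_init_le _).trans (mem_sphere_zero_iff_norm.1 p.2).le⟩
  continuous_toFun := (continuous_init.comp continuous_subtype_val).subtype_mk _

@[simp]
lemma sphereToDisk_hemisphereMap {n : ℕ} (t : ℝ) (ht : |t| = 1) (w : 𝔻 n) :
    sphereToDisk (hemisphereMap t ht w) = w :=
  Subtype.ext (init_hemisphereLift t (w : EuclideanSpace ℝ (Fin n)))

namespace ProdDisk

variable (X : Type*) [TopologicalSpace X] (n : ℕ)

def boundaryIncl : TopCat.of (X × ∂𝔻 n) ⟶ TopCat.of (X × 𝔻 n) :=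
  TopCat.ofHom ⟨Prod.map id (Set.inclusion sphere_subset_closedBall),
    Continuous.prodMap continuous_id (continuous_inclusion _)⟩

abbrev double : TopCat := pushout (boundaryIncl X n) (boundaryIncl X n)

def hemisphereHom (t : ℝ) (ht : |t| = 1) : TopCat.of (X × 𝔻 n) ⟶ TopCat.of (X × 𝕊 n) :=
  TopCat.ofHom ((ContinuousMap.id X).prodMap (hemisphereMap t ht))

lemma boundaryIncl_comp_hemisphereHom {t s : ℝ} (ht : |t| = 1) (hs : |s| = 1) :
    boundaryIncl X n ≫ hemisphereHom X n t ht = boundaryIncl X n ≫ hemisphereHom X n s hs := by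
  ext ⟨x, w, hw⟩ : 3
  · rfl
  · have hw1 : ‖w‖ = 1 := mem_sphere_zero_iff_norm.1 hw
    simp [hemisphereHom, hemisphereMap, boundaryIncl, hemisphereLift_of_norm_eq_one _ hw1]

def doubleToProd : double X n ⟶ TopCat.of (X × 𝕊 n) :=
  pushout.desc (hemisphereHom X n 1 abs_one) (hemisphereHom X n (-1) (by simp))
    (boundaryIncl_comp_hemisphereHom X n _ _)

variable {X n}

lemma inl_eq_inr_of_norm_eq_one {x : X} {w : 𝔻 n} (hw : ‖(w : EuclideanSpace ℝ (Fin n))‖ = 1) :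
    pushout.inl (boundaryIncl X n) (boundaryIncl X n) (x, w) =
      pushout.inr (boundaryIncl X n) (boundaryIncl X n) (x, w) :=
  ConcreteCategory.congr_hom (pushout.condition (f := boundaryIncl X n) (g := boundaryIncl X n))
    ((x, ⟨w, mem_sphere_zero_iff_norm.2 hw⟩) : X × ∂𝔻 n)

variable (X n) in
def prodToDouble (y : X × 𝕊 n) : double X n :=
  if 0 ≤ (y.2 : EuclideanSpace ℝ (Fin (n + 1))) (Fin.last n) then
    pushout.inl (boundaryIncl X n) (boundaryIncl X n) (y.1, sphereToDisk y.2)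
  else
    pushout.inr (boundaryIncl X n) (boundaryIncl X n) (y.1, sphereToDisk y.2)

lemma continuous_prodToDouble : Continuous (prodToDouble X n) := by
  refine Continuous.if_le ?_ ?_ continuous_const ?_ ?_
  · exact (pushout.inl (boundaryIncl X n) (boundaryIncl X n)).hom.continuous.comp <| by fun_prop
  · exact (pushout.inr (boundaryIncl X n) (boundaryIncl X n)).hom.continuous.comp <| by fun_prop
  · fun_prop
  · rintro ⟨x, p, hp⟩ hp0
    exact inl_eq_inr_of_norm_eq_one <| (norm_init_of_apply_last_eq_zero hp0.symm).trans
      (mem_sphere_zero_iff_norm.1 hp)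

lemma prodToDouble_of_nonneg {y : X × 𝕊 n}
    (h : 0 ≤ (y.2 : EuclideanSpace ℝ (Fin (n + 1))) (Fin.last n)) :
    prodToDouble X n y =
      pushout.inl (boundaryIncl X n) (boundaryIncl X n) (y.1, sphereToDisk y.2) :=
  if_pos h

lemma prodToDouble_of_nonpos {y : X × 𝕊 n}
    (h : (y.2 : EuclideanSpace ℝ (Fin (n + 1))) (Fin.last n) ≤ 0) :
    prodToDouble X n y =
      pushout.inr (boundaryIncl X n) (boundaryIncl X n) (y.1, sphereToDisk y.2) := by
  rcases h.lt_or_eq with hneg | hzero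
  · exact if_neg hneg.not_ge
  · rw [prodToDouble, if_pos hzero.ge]
    exact inl_eq_inr_of_norm_eq_one <| (norm_init_of_apply_last_eq_zero hzero).trans
      (mem_sphere_zero_iff_norm.1 y.2.2)

@[simp]
lemma doubleToProd_inl (y : X × 𝔻 n) :
    doubleToProd X n (pushout.inl (boundaryIncl X n) (boundaryIncl X n) y) =
      (y.1, hemisphereMap 1 abs_one y.2) :=
  ConcreteCategory.congr_hom
    (pushout.inl_desc (hemisphereHom X n 1 _) (hemisphereHom X n (-1) _) _) y

@[simp]
lemma doubleToProd_inr (y : X × 𝔻 n) :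
    doubleToProd X n (pushout.inr (boundaryIncl X n) (boundaryIncl X n) y) =
      (y.1, hemisphereMap (-1) (by simp) y.2) :=
  ConcreteCategory.congr_hom
    (pushout.inr_desc (hemisphereHom X n 1 _) (hemisphereHom X n (-1) _) _) y

lemma doubleToProd_prodToDouble (y : X × 𝕊 n) : doubleToProd X n (prodToDouble X n y) = y := by
  obtain ⟨x, p, hp⟩ := y
  have hp1 : ‖p‖ = 1 := mem_sphere_zero_iff_norm.1 hp
  rcases le_total 0 (p (Fin.last n)) with h | h
  · rw [prodToDouble_of_nonneg h, doubleToProd_inl]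
    exact Prod.ext rfl (Subtype.ext (hemisphereLift_one_init hp1 h))
  · rw [prodToDouble_of_nonpos h, doubleToProd_inr]
    exact Prod.ext rfl (Subtype.ext (hemisphereLift_neg_one_init hp1 h))

lemma prodToDouble_doubleToProd (z : double X n) : prodToDouble X n (doubleToProd X n z) = z := by
  suffices doubleToProd X n ≫ TopCat.ofHom ⟨prodToDouble X n, continuous_prodToDouble⟩ = 𝟙 _ from
    ConcreteCategory.congr_hom this z
  refine pushout.hom_ext ?_ ?_ <;> rw [Category.comp_id] <;> ext y
  · change prodToDouble X n
      (doubleToProd X n (pushout.inl (boundaryIncl X n) (boundaryIncl X n) y)) = _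
    rw [doubleToProd_inl, prodToDouble_of_nonneg, sphereToDisk_hemisphereMap]
    simp [hemisphereMap]
  · change prodToDouble X n
      (doubleToProd X n (pushout.inr (boundaryIncl X n) (boundaryIncl X n) y)) = _
    rw [doubleToProd_inr, prodToDouble_of_nonpos, sphereToDisk_hemisphereMap]
    simp [hemisphereMap]

variable (X n) in
def doubleHomeomorph : double X n ≃ₜ X × 𝕊 n where
  toFun := doubleToProd X n
  invFun := prodToDouble X n
  left_inv := prodToDouble_doubleToProd
  right_inv := doubleToProd_prodToDouble
  continuous_toFun := (doubleToProd X n).hom.continuous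
  continuous_invFun := continuous_prodToDouble

end ProdDisk

end

/-- The double of the solid torus `S¹ × D²` along its boundary torus `S¹ × S¹`, i.e. the
pushout in `TopCat` of two copies of the boundary inclusion `S¹ × S¹ ↪ S¹ × D²`,
is homeomorphic to `S¹ × S²`. -/
theorem double_of_solid_torus_homeomorphic :
    Nonempty ((pushout boundaryTorusIncl boundaryTorusIncl : TopCat) ≃ₜ
      (sphere (0 : EuclideanSpace ℝ (Fin 2)) 1 ×
        sphere (0 : EuclideanSpace ℝ (Fin 3)) 1)) :=
  ⟨ProdDisk.doubleHomeomorph _ 2⟩
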